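/- With the notation of the previous statement, define for a measurable function h : ℝ → ℝ the sets N_h = {x : h(x) = 0} and E_h = {x : ∫_U h(y)⁻² dy = +∞ for every open set U containing x}. Then N_σᶜ = G(N_bᶜ) and E_σᶜ = G(E_{b/√f}ᶜ), where σ = (b/f) ∘ H. -/

import Mathlib

/-!
`G` is the distribution function `x ↦ ∫₀ˣ dν` of the measure `ν = (1/f) dx`, which is finite on
compacts and has no atoms; so `G` is continuous and nondecreasing, and strictly increasing since
it has the left inverse `H`. A strictly increasing distribution function pulls Lebesgue measure
back to `ν`, whence `∫_{G(V)} φ = ∫_V (φ ∘ G) / f`; for `φ = σ⁻²` the right side is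
`∫_V f / b²`. Open sets correspond under `G`, and an open set leaving the interval `G(ℝ)` has
infinite `σ⁻²`-integral, because `σ⁻² = ∞` on a subset of positive measure outside `G(ℝ)`.
-/

open MeasureTheory

/-- The primitive `G(x) = ∫₀ˣ (1/f)(y) dy` of the reciprocal of a drift
function `f` (with the convention `1/0 = ∞`). -/
noncomputable def primInv (f : ℝ → ℝ) (x : ℝ) : ℝ :=
  (∫⁻ y in Set.Ioc 0 x, (ENNReal.ofReal (f y))⁻¹ ∂volume).toReal -
    (∫⁻ y in Set.Ioc x 0, (ENNReal.ofReal (f y))⁻¹ ∂volume).toReal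

open Set ENNReal

lemma Function.LeftInverse.compl_setOf_comp_union_compl_range {α β : Type*} {G : α → β}
    {H : β → α} (hH : Function.LeftInverse H G) (p : α → Prop) :
    ({x | x ∈ range G ∧ p (H x)} ∪ (range G)ᶜ)ᶜ = G '' {x | p x}ᶜ := by
  ext x
  simp only [compl_union, compl_compl, mem_inter_iff, mem_compl_iff, mem_ofPred_eq, not_and]
  constructor
  · rintro ⟨hx, ⟨t, rfl⟩⟩
    exact ⟨t, by simpa [hH t] using hx ⟨t, rfl⟩, rfl⟩
  · rintro ⟨t, ht, rfl⟩
    exact ⟨fun _ => by simpa [hH t] using ht, t, rfl⟩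

lemma LocallyBoundedVariationOn.measurable {f : ℝ → ℝ}
    (hf : LocallyBoundedVariationOn f univ) : Measurable f := by
  obtain ⟨p, q, hp, hq, rfl⟩ := hf.exists_monotoneOn_sub_monotoneOn
  exact (monotoneOn_univ.1 hp).measurable.sub (monotoneOn_univ.1 hq).measurable

lemma ENNReal.inv_ofReal_mul_ofReal_sq {a : ℝ} (ha : 0 ≤ a) :
    (ENNReal.ofReal a)⁻¹ * ENNReal.ofReal (a ^ 2) = ENNReal.ofReal a := by
  rcases ha.eq_or_lt with rfl | ha
  · simp
  · rw [sq, ofReal_mul ha.le, ← mul_assoc, ENNReal.inv_mul_cancel (by simpa) ofReal_ne_top,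
      one_mul]

lemma Continuous.isOpenMap_of_strictMono {G : ℝ → ℝ} (hc : Continuous G) (hG : StrictMono G) :
    IsOpenMap G := by
  intro V hV
  rw [isOpen_iff_forall_mem_open]
  rintro _ ⟨t, ht, rfl⟩
  obtain ⟨a, b, hab, hsub⟩ := mem_nhds_iff_exists_Ioo_subset.1 (hV.mem_nhds ht)
  exact ⟨Ioo (G a) (G b), hc.image_Ioo_of_strictMono hG ▸ image_mono hsub, isOpen_Ioo,
    hG hab.1, hG hab.2⟩

namespace MeasureTheory

lemma ae_lt_top_of_sigmaFinite_withDensity {α : Type*} [MeasurableSpace α] {μ : Measure α}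
    [SigmaFinite μ] {w : α → ℝ≥0∞} [SigmaFinite (μ.withDensity w)] (hw : Measurable w) :
    ∀ᵐ x ∂μ, w x < ∞ :=
  ae_of_forall_measure_lt_top_ae_restrict' (μ.withDensity w) _ fun s hs _ hνs =>
    ae_lt_top hw (by rwa [withDensity_apply _ hs] at hνs : ∫⁻ x in s, w x ∂μ < ∞).ne

lemma MeasurableEmbedding.setLIntegral_image {α β : Type*} [MeasurableSpace α]
    [MeasurableSpace β] {F : α → β} (hF : MeasurableEmbedding F) (μ : Measure β) (V : Set α)
    (g : β → ℝ≥0∞) :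
    ∫⁻ y in F '' V, g y ∂μ = ∫⁻ x in V, g (F x) ∂(μ.comap F) := by
  rw [hF.restrict_comap, ← hF.lintegral_map, hF.map_comap,
    Measure.restrict_restrict hF.measurableSet_range,
    inter_eq_right.2 (image_subset_range F V)]

namespace Measure

noncomputable def primitive (μ : Measure ℝ) (x : ℝ) : ℝ := ∫ _ in 0..x, (1 : ℝ) ∂μ

variable (μ : Measure ℝ) [IsLocallyFiniteMeasure μ]

lemma primitive_sub_primitive {s t : ℝ} (hst : s ≤ t) :
    μ.primitive t - μ.primitive s = μ.real (Ioc s t) := by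
  rw [primitive, primitive, intervalIntegral.integral_interval_sub_left
      intervalIntegrable_const intervalIntegrable_const,
    intervalIntegral.integral_const', Ioc_eq_empty (not_lt.2 hst)]
  simp

lemma monotone_primitive : Monotone μ.primitive := fun _ _ hst =>
  sub_nonneg.1 (μ.primitive_sub_primitive hst ▸ measureReal_nonneg)

lemma continuous_primitive [NullSingletonClass μ] : Continuous μ.primitive :=
  intervalIntegral.continuous_primitive (fun _ _ => intervalIntegrable_const) 0

lemma comap_primitive [NullSingletonClass μ] (hF : StrictMono μ.primitive) :
    volume.comap μ.primitive = μ := by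
  have hemb := μ.continuous_primitive.measurableEmbedding hF.injective
  refine (ext_of_Ioc μ _ fun a b hab => ?_).symm
  rw [hemb.comap_apply, μ.continuous_primitive.image_Ioc_of_strictMono hF, Real.volume_Ioc,
    μ.primitive_sub_primitive hab.le, measureReal_def, ofReal_toReal measure_Ioc_lt_top.ne]

end Measure
end MeasureTheory

/-- The singular set `E_h` of the paper, for `φ = h⁻²`. -/
def singularSet (φ : ℝ → ℝ≥0∞) : Set ℝ :=
  {x | ∀ U : Set ℝ, IsOpen U → x ∈ U → ∫⁻ y in U, φ y ∂volume = ⊤}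

lemma Set.OrdConnected.volume_diff_pos {S U : Set ℝ} {y : ℝ} (hS : S.OrdConnected)
    (hU : IsOpen U) (hyU : y ∈ U) (hyS : y ∉ S) : 0 < volume (U \ S) := by
  obtain ⟨l, u, hy, hsub⟩ := mem_nhds_iff_exists_Ioo_subset.1 (hU.mem_nhds hyU)
  by_cases hbelow : ∃ p ∈ S, p < y
  · obtain ⟨p, hp, hpy⟩ := hbelow
    have hIco : Ico y u ⊆ U \ S := fun z hz =>
      ⟨hsub ⟨hy.1.trans_le hz.1, hz.2⟩, fun hzS => hyS (hS.out hp hzS ⟨hpy.le, hz.1⟩)⟩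
    calc 0 < volume (Ico y u) := by simp [hy.2]
      _ ≤ volume (U \ S) := measure_mono hIco
  · push Not at hbelow
    have hIoc : Ioc l y ⊆ U \ S := fun z hz =>
      ⟨hsub ⟨hz.1, hz.2.trans_lt hy.2⟩,
        fun hzS => hyS (le_antisymm hz.2 (hbelow z hzS) ▸ hzS)⟩
    calc 0 < volume (Ioc l y) := by simp [hy.1]
      _ ≤ volume (U \ S) := measure_mono hIoc

lemma setLIntegral_eq_top_of_not_subset {S U : Set ℝ} (hS : S.OrdConnected) (hU : IsOpen U)
    (hUS : ¬ U ⊆ S) {φ : ℝ → ℝ≥0∞} (hφ : ∀ y ∉ S, φ y = ⊤) : ∫⁻ y in U, φ y = ⊤ := by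
  obtain ⟨y, hyU, hyS⟩ := not_subset.1 hUS
  refine top_le_iff.1 (le_trans ?_ (lintegral_mono_set sdiff_subset : ∫⁻ y in U \ S, φ y ≤ _))
  rw [setLIntegral_congr_fun (hU.measurableSet.diff hS.measurableSet) (fun y hy => hφ y hy.2),
    setLIntegral_const, top_mul (hS.volume_diff_pos hU hyU hyS).ne']

open Classical in
lemma compl_singularSet_eq_image {G : ℝ → ℝ} (hc : Continuous G) (hG : StrictMono G)
    {φ ψ : ℝ → ℝ≥0∞} (h : ∀ V, IsOpen V → ∫⁻ y in G '' V, φ y = ∫⁻ t in V, ψ t) :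
    (singularSet fun y => if y ∈ range G then φ y else ⊤)ᶜ = G '' (singularSet ψ)ᶜ := by
  have hφ : ∀ U ⊆ range G, IsOpen U →
      ∫⁻ y in U, (if y ∈ range G then φ y else ⊤) = ∫⁻ y in U, φ y := fun U hUG hU =>
    setLIntegral_congr_fun hU.measurableSet fun y hy => if_pos (hUG hy)
  ext x
  simp only [singularSet, mem_compl_iff, mem_ofPred_eq, not_forall, mem_image, exists_prop]
  constructor
  · rintro ⟨U, hU, hxU, hfin⟩
    have hUG : U ⊆ range G := by_contra fun hUG => hfin <|
      setLIntegral_eq_top_of_not_subset (isPreconnected_range hc).ordConnected hU hUG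
        fun y hy => if_neg hy
    obtain ⟨t, rfl⟩ := hUG hxU
    refine ⟨t, ⟨G ⁻¹' U, hU.preimage hc, hxU, ?_⟩, rfl⟩
    rwa [← h _ (hU.preimage hc), image_preimage_eq_of_subset hUG, ← hφ U hUG hU]
  · rintro ⟨t, ⟨V, hV, htV, hfin⟩, rfl⟩
    have hGV := hc.isOpenMap_of_strictMono hG V hV
    refine ⟨G '' V, hGV, mem_image_of_mem G htV, ?_⟩
    rwa [hφ _ (image_subset_range G V) hGV, h V hV]

lemma primInv_eq_primitive (f : ℝ → ℝ) :
    primInv f = (volume.withDensity fun y => (ENNReal.ofReal (f y))⁻¹).primitive := by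
  funext x
  simp [primInv, Measure.primitive, intervalIntegral.integral_const', measureReal_def,
    withDensity_apply]

section primInv

variable {f : ℝ → ℝ}
  (hint : ∀ K : Set ℝ, IsCompact K → ∫⁻ x in K, (ENNReal.ofReal (f x))⁻¹ ∂volume < ⊤)
include hint

lemma isFiniteMeasureOnCompacts_withDensity_inv :
    IsFiniteMeasureOnCompacts (volume.withDensity fun y => (ENNReal.ofReal (f y))⁻¹) :=
  ⟨fun K hK => by rw [withDensity_apply _ hK.measurableSet]; exact hint K hK⟩

lemma continuous_primInv : Continuous (primInv f) := by
  have := isFiniteMeasureOnCompacts_withDensity_inv hint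
  exact primInv_eq_primitive f ▸ Measure.continuous_primitive _

lemma monotone_primInv : Monotone (primInv f) := by
  have := isFiniteMeasureOnCompacts_withDensity_inv hint
  exact primInv_eq_primitive f ▸ Measure.monotone_primitive _

lemma setLIntegral_image_primInv (hf : Measurable f) (hG : StrictMono (primInv f)) {V : Set ℝ}
    (hV : MeasurableSet V) (g : ℝ → ℝ≥0∞) :
    ∫⁻ y in primInv f '' V, g y = ∫⁻ t in V, (ENNReal.ofReal (f t))⁻¹ * g (primInv f t) := by
  have := isFiniteMeasureOnCompacts_withDensity_inv hint
  have hw : Measurable fun y => (ENNReal.ofReal (f y))⁻¹ := hf.ennreal_ofReal.inv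
  rw [primInv_eq_primitive] at hG ⊢
  rw [((Measure.continuous_primitive _).measurableEmbedding hG.injective).setLIntegral_image,
    Measure.comap_primitive _ hG, setLIntegral_withDensity_eq_setLIntegral_mul_non_measurable _
      hw _ hV (ae_restrict_of_ae (ae_lt_top_of_sigmaFinite_withDensity hw))]
  rfl

end primInv

open Classical in
/-- `σ = (b/f) ∘ H` is extended by `0` outside `G(ℝ)` (`b(±∞) = 0`), and the singular sets are
expressed through the `[0,∞]`-valued integrands `σ⁻² = f(H ·)² / b(H ·)²` and
`(b/√f)⁻² = f / b²`. -/
theorem zero_and_singular_sets_transform_general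
    (f : ℝ → ℝ) (hnn : ∀ x, 0 ≤ f x)
    (hbv : LocallyBoundedVariationOn f Set.univ)
    (hint : ∀ K : Set ℝ, IsCompact K →
      ∫⁻ x in K, (ENNReal.ofReal (f x))⁻¹ ∂volume < ⊤)
    (b : ℝ → ℝ)
    (H : ℝ → ℝ) (hH : ∀ t, H (primInv f t) = t) :
    ({x : ℝ | x ∈ Set.range (primInv f) ∧ b (H x) = 0} ∪
        (Set.range (primInv f))ᶜ)ᶜ = primInv f '' {x : ℝ | b x = 0}ᶜ ∧
    {x : ℝ | ∀ U : Set ℝ, IsOpen U → x ∈ U →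
        ∫⁻ y in U,
          (if y ∈ Set.range (primInv f) then
            (ENNReal.ofReal (b (H y) ^ 2))⁻¹ * ENNReal.ofReal (f (H y) ^ 2)
           else ⊤) ∂volume = ⊤}ᶜ
      = primInv f ''
        {x : ℝ | ∀ U : Set ℝ, IsOpen U → x ∈ U →
          ∫⁻ y in U,
            (ENNReal.ofReal (b y ^ 2))⁻¹ * ENNReal.ofReal (f y) ∂volume = ⊤}ᶜ := by
  have hG : StrictMono (primInv f) :=
    (monotone_primInv hint).strictMono_of_injective (Function.LeftInverse.injective hH)
  refine ⟨Function.LeftInverse.compl_setOf_comp_union_compl_range hH (b · = 0),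
    compl_singularSet_eq_image (continuous_primInv hint) hG fun V hV => ?_⟩
  rw [setLIntegral_image_primInv hint hbv.measurable hG hV.measurableSet]
  refine lintegral_congr fun t => ?_
  rw [hH, mul_left_comm, ENNReal.inv_ofReal_mul_ofReal_sq (hnn t)]

open Classical in
/-- With `σ = (b/f) ∘ H` (extended by `b(±∞) = 0` outside `G(ℝ)`):
`N_σᶜ = G(N_bᶜ)` and `E_σᶜ = G(E_{b/√f}ᶜ)`.  The zero set of `σ` is
`{x ∈ G(ℝ) | b(H(x)) = 0} ∪ G(ℝ)ᶜ`; the singular sets `E_h` are formulated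
via `[0,∞]`-valued integrands: `σ⁻² = f(H(·))²/b(H(·))²` on `G(ℝ)` (and `∞`
outside), and `(b/√f)⁻² = f/b²`. -/
theorem zero_and_singular_sets_transform
    (f : ℝ → ℝ) (hnn : ∀ x, 0 ≤ f x)
    (hrc : ∀ x, ContinuousWithinAt f (Set.Ici x) x)
    (hbv : LocallyBoundedVariationOn f Set.univ)
    (hint : ∀ K : Set ℝ, IsCompact K →
      ∫⁻ x in K, (ENNReal.ofReal (f x))⁻¹ ∂volume < ⊤)
    (b : ℝ → ℝ) (hb : Measurable b)
    (H : ℝ → ℝ) (hH : ∀ t, H (primInv f t) = t) :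
    ({x : ℝ | x ∈ Set.range (primInv f) ∧ b (H x) = 0} ∪
        (Set.range (primInv f))ᶜ)ᶜ = primInv f '' {x : ℝ | b x = 0}ᶜ ∧
    {x : ℝ | ∀ U : Set ℝ, IsOpen U → x ∈ U →
        ∫⁻ y in U,
          (if y ∈ Set.range (primInv f) then
            (ENNReal.ofReal (b (H y) ^ 2))⁻¹ * ENNReal.ofReal (f (H y) ^ 2)
           else ⊤) ∂volume = ⊤}ᶜ
      = primInv f ''
        {x : ℝ | ∀ U : Set ℝ, IsOpen U → x ∈ U →
          ∫⁻ y in U,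
            (ENNReal.ofReal (b y ^ 2))⁻¹ * ENNReal.ofReal (f y) ∂volume = ⊤}ᶜ :=
  zero_and_singular_sets_transform_general f hnn hbv hint b H hH
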